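/- Let n, p, d be positive natural numbers with n ≥ p + d, and let X ∈ ℝ^{n×p}, Y ∈ ℝ^{n×d} be such that the concatenated matrix W = (X Y) ∈ ℝ^{n×(p+d)} has full column rank p + d. Write Q_X = I_n − X (X^⊤ X)^{-1} X^⊤ and Q_Y = I_n − Y (Y^⊤ Y)^{-1} Y^⊤, and set Γ = (X^⊤ X)^{-1} X^⊤ Y. Then Γ (Y^⊤ Q_X Y)^{-1} Γ^⊤ = (X^⊤ Q_Y X)^{-1} − (X^⊤ X)^{-1}. -/

import Mathlib

/-!
Write `W = (X Y)`. Full column rank makes `W`, `X` and `Y` injective, so the Gram matrices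
`XᵀX`, `YᵀY` and `WᵀW = [[XᵀX, XᵀY], [YᵀX, YᵀY]]` are invertible; hence so is the Schur complement
`YᵀQ_X Y = YᵀY - YᵀX (XᵀX)⁻¹ XᵀY` of `XᵀX` in `WᵀW`. Since `XᵀQ_Y X = XᵀX - XᵀY (YᵀY)⁻¹ YᵀX`,
the Woodbury identity expresses its inverse as `(XᵀX)⁻¹ + Γ (YᵀQ_X Y)⁻¹ Γᵀ`.
-/

open Matrix

namespace Matrix

variable {m n n' : Type*} [Fintype n]

theorem mulVec_injective_of_rank_eq_card {K : Type*} [Field K] (A : Matrix m n K)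
    (h : A.rank = Fintype.card n) : Function.Injective A.mulVec := by
  have hrk := LinearMap.finrank_range_add_finrank_ker A.mulVecLin
  rw [← rank, h, Module.finrank_fintype_fun_eq_card, Nat.add_eq_left,
    Submodule.finrank_eq_zero] at hrk
  exact LinearMap.ker_eq_bot.mp hrk

theorem mulVec_injective_of_fromCols_left {R : Type*} [Semiring R] [Fintype n']
    {A : Matrix m n R} {B : Matrix m n' R} (h : Function.Injective (fromCols A B).mulVec) :
    Function.Injective A.mulVec := fun u v huv =>
  (Sum.elim_eq_iff.mp <| @h (Sum.elim u 0) (Sum.elim v 0) <| by simpa [fromCols_mulVec] using huv).1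

theorem mulVec_injective_of_fromCols_right {R : Type*} [Semiring R] [Fintype n']
    {A : Matrix m n' R} {B : Matrix m n R} (h : Function.Injective (fromCols A B).mulVec) :
    Function.Injective B.mulVec := fun u v huv =>
  (Sum.elim_eq_iff.mp <| @h (Sum.elim 0 u) (Sum.elim 0 v) <| by simpa [fromCols_mulVec] using huv).2

theorem isUnit_transpose_mul_self {K : Type*} [Field K] [LinearOrder K] [IsStrictOrderedRing K]
    [Fintype m] [DecidableEq n] (A : Matrix m n K) (h : Function.Injective A.mulVec) :
    IsUnit (Aᵀ * A) := by
  rw [← mulVec_injective_iff_isUnit, ← coe_mulVecLin, ← LinearMap.ker_eq_bot,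
    ker_mulVecLin_transpose_mul_self, LinearMap.ker_eq_bot]
  exact h

theorem isUnit_sub_mul_inv_mul_of_isUnit_fromBlocks {R : Type*} [CommRing R] [DecidableEq n]
    [Fintype n'] [DecidableEq n'] {A : Matrix n n R} {B : Matrix n n' R} {C : Matrix n' n R}
    {D : Matrix n' n' R} (h : IsUnit (fromBlocks A B C D)) (hA : IsUnit A) :
    IsUnit (D - C * A⁻¹ * B) := by
  obtain ⟨_⟩ := hA.nonempty_invertible
  rwa [← invOf_eq_nonsing_inv, ← isUnit_fromBlocks_iff_of_invertible₁₁]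

theorem transpose_mul_sub_mul_mul_transpose_mul {R : Type*} [CommRing R] [Fintype m]
    [DecidableEq m] [Fintype n'] (B : Matrix m n' R) (A : Matrix m n R)
    (M : Matrix n n R) :
    Bᵀ * (1 - A * M * Aᵀ) * B = Bᵀ * B - Bᵀ * A * M * (Aᵀ * B) := by
  simp only [Matrix.mul_sub, Matrix.sub_mul, Matrix.mul_one, Matrix.mul_assoc]

theorem inv_sub_mul_inv_mul_sub_inv {R : Type*} [CommRing R] [DecidableEq n]
    [Fintype n'] [DecidableEq n']
    (A : Matrix n n R) (B : Matrix n n' R) (C : Matrix n' n R) (D : Matrix n' n' R)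
    (hA : IsUnit A) (hD : IsUnit D) (hS : IsUnit (D - C * A⁻¹ * B)) :
    (A - B * D⁻¹ * C)⁻¹ - A⁻¹ = A⁻¹ * B * (D - C * A⁻¹ * B)⁻¹ * C * A⁻¹ := by
  have hDD : D⁻¹⁻¹ = D := nonsing_inv_nonsing_inv D ((isUnit_iff_isUnit_det D).mp hD)
  have h := add_mul_mul_inv_eq_sub A (-B) D⁻¹ C hA (isUnit_nonsing_inv_iff.mpr hD)
    (by simpa [hDD, sub_eq_add_neg] using hS)
  simp only [Matrix.neg_mul, Matrix.mul_neg, hDD, ← sub_eq_add_neg] at h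
  rw [h, sub_neg_eq_add, add_sub_cancel_left]

end Matrix

theorem stmt_15_general (n p d : ℕ)
    (X : Matrix (Fin n) (Fin p) ℝ) (Y : Matrix (Fin n) (Fin d) ℝ)
    (hrank : (Matrix.fromCols X Y).rank = p + d)
    (QX : Matrix (Fin n) (Fin n) ℝ)
    (hQX : QX = (1 : Matrix (Fin n) (Fin n) ℝ) - X * (Xᵀ * X)⁻¹ * Xᵀ)
    (QY : Matrix (Fin n) (Fin n) ℝ)
    (hQY : QY = (1 : Matrix (Fin n) (Fin n) ℝ) - Y * (Yᵀ * Y)⁻¹ * Yᵀ)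
    (Γ : Matrix (Fin p) (Fin d) ℝ) (hΓ : Γ = (Xᵀ * X)⁻¹ * (Xᵀ * Y)) :
    Γ * (Yᵀ * QX * Y)⁻¹ * Γᵀ = (Xᵀ * QY * X)⁻¹ - (Xᵀ * X)⁻¹ := by
  subst hQX hQY hΓ
  have hW : Function.Injective (fromCols X Y).mulVec :=
    mulVec_injective_of_rank_eq_card _ (by simpa using hrank)
  have hA : IsUnit (Xᵀ * X) := isUnit_transpose_mul_self X (mulVec_injective_of_fromCols_left hW)
  have hD : IsUnit (Yᵀ * Y) := isUnit_transpose_mul_self Y (mulVec_injective_of_fromCols_right hW)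
  have hS : IsUnit (Yᵀ * Y - Yᵀ * X * (Xᵀ * X)⁻¹ * (Xᵀ * Y)) := by
    refine isUnit_sub_mul_inv_mul_of_isUnit_fromBlocks ?_ hA
    rw [← fromRows_mul_fromCols, ← transpose_fromCols]
    exact isUnit_transpose_mul_self _ hW
  have hΓT : ((Xᵀ * X)⁻¹ * (Xᵀ * Y))ᵀ = Yᵀ * X * (Xᵀ * X)⁻¹ := by
    simp [transpose_nonsing_inv, Matrix.mul_assoc]
  rw [transpose_mul_sub_mul_mul_transpose_mul, transpose_mul_sub_mul_mul_transpose_mul, hΓT,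
    inv_sub_mul_inv_mul_sub_inv _ _ _ _ hA hD hS]
  simp only [Matrix.mul_assoc]

theorem stmt_15 (n p d : ℕ) (hp : 0 < p) (hd : 0 < d) (hn : p + d ≤ n)
    (X : Matrix (Fin n) (Fin p) ℝ) (Y : Matrix (Fin n) (Fin d) ℝ)
    (hrank : (Matrix.fromCols X Y).rank = p + d)
    (QX : Matrix (Fin n) (Fin n) ℝ)
    (hQX : QX = (1 : Matrix (Fin n) (Fin n) ℝ) - X * (Xᵀ * X)⁻¹ * Xᵀ)
    (QY : Matrix (Fin n) (Fin n) ℝ)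
    (hQY : QY = (1 : Matrix (Fin n) (Fin n) ℝ) - Y * (Yᵀ * Y)⁻¹ * Yᵀ)
    (Γ : Matrix (Fin p) (Fin d) ℝ) (hΓ : Γ = (Xᵀ * X)⁻¹ * (Xᵀ * Y)) :
    Γ * (Yᵀ * QX * Y)⁻¹ * Γᵀ = (Xᵀ * QY * X)⁻¹ - (Xᵀ * X)⁻¹ :=
  stmt_15_general n p d X Y hrank QX hQX QY hQY Γ hΓ
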